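/- arXiv:1109.5877 — 2 statements merged into one kernel-verified Lean document; each statement's English description precedes it below -/
import Mathlib

section
/- Lax pairs and first integrals (Corollary): Take K = ℝ and assume A is finite-dimensional over ℝ, equipped with a norm making it a normed ℝ-algebra. Let x, y ∈ Γ with x even, and let X, Y : ℝ → Matrix (Fin N) (Fin N) A be such that X t ∈ M^x(w) and Y t ∈ M^y(w) for every t ∈ ℝ, and such that for all t, α, β the entry function s ↦ X s α β has at t the derivative ((X t) * (Y t) − sign(x,y) • ((Y t) * (X t))) α β (graded commutator equation dX/dt = [X,Y]). Then for every k ≥ 1 the function t ↦ Γtr_{k·x}((X t)^k) is constant on ℝ, where k·x denotes the k-fold sum x + ⋯ + x in Γ (equal to x if k is odd and to 0 if k is even). -/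
/-!
Along the flow, `d/dt Γtr((X t)^k) = Γtr(∑ᵢ X^(k-1-i) [X,Y] X^i)`. Since `dX/dt` is a limit of
difference quotients of matrices in `M^x(w)`, it lies in `M^x(w)` as well as in `M^(x+y)(w)`.
So either `y = 0`, and then `[X,Y] = XY - YX` and the sum telescopes to `X^k Y - Y X^k`, whose
graded trace vanishes by cyclicity; or `y ≠ 0`, and then `dX/dt = 0`.
-/

open Matrix

abbrev Gamma (n : ℕ) := Fin n → ZMod 2

def gpair {n : ℕ} (γ δ : Gamma n) : ZMod 2 := ∑ i, γ i * δ i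

def gsign {n : ℕ} (γ δ : Gamma n) : ℤ := if gpair γ δ = 1 then -1 else 1

def GammaEven {n : ℕ} (γ : Gamma n) : Prop := gpair γ γ = 0

instance {n : ℕ} : DecidablePred (GammaEven (n := n)) := fun γ =>
  inferInstanceAs (Decidable (gpair γ γ = 0))

/-- `Γ`-graded commutativity of the graded algebra `A`:
`b * a = sign(γ,δ) • (a * b)` for homogeneous `a, b`. -/
def GradedComm {n : ℕ} {K A : Type*} [Field K] [Ring A] [Algebra K A]
    (𝒜 : Gamma n → Submodule K A) : Prop :=
  ∀ (γ δ : Gamma n) (a b : A), a ∈ 𝒜 γ → b ∈ 𝒜 δ → b * a = gsign γ δ • (a * b)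

/-- `X ∈ M^x(w)` : the matrix `X` is homogeneous of degree `x` w.r.t. the weight map `w`. -/
def Mdeg {n : ℕ} {K A : Type*} [Field K] [Ring A] [Algebra K A]
    (𝒜 : Gamma n → Submodule K A) {ι : Type*} (w : ι → Gamma n) (x : Gamma n)
    (X : Matrix ι ι A) : Prop :=
  ∀ α β, X α β ∈ 𝒜 (w α + w β + x)

/-- `X ∈ M⁰(w)` : the matrix `X` is homogeneous of degree `0` w.r.t. the weight map `w`. -/
def Mdeg0 {n : ℕ} {K A : Type*} [Field K] [Ring A] [Algebra K A]
    (𝒜 : Gamma n → Submodule K A) {ι : Type*} (w : ι → Gamma n)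
    (X : Matrix ι ι A) : Prop :=
  ∀ α β, X α β ∈ 𝒜 (w α + w β)

/-- The graded trace of a homogeneous matrix `X` of degree `x`:
`Γtr_x(X) = ∑ α, sign(w α + x, w α) • X α α`. -/
def gtr {n : ℕ} {ι : Type*} [Fintype ι] {A : Type*} [Ring A]
    (w : ι → Gamma n) (x : Gamma n) (X : Matrix ι ι A) : A :=
  ∑ α, gsign (w α + x) (w α) • X α α

theorem Gamma.add_self {n : ℕ} (γ : Gamma n) : γ + γ = 0 :=
  funext fun i => CharTwo.add_self_eq_zero (γ i)

theorem gsign_zero_right {n : ℕ} (γ : Gamma n) : gsign γ 0 = 1 := by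
  simp [gsign, gpair]

theorem gsign_mul_self {n : ℕ} (γ δ : Gamma n) : gsign γ δ * gsign γ δ = 1 := by
  unfold gsign
  split <;> norm_num

theorem gsign_mul_gsign_eq {n : ℕ} {a b c d e f g h : Gamma n}
    (hp : gpair a b + gpair c d = gpair e f + gpair g h) :
    gsign a b * gsign c d = gsign e f * gsign g h := by
  have key : ∀ p q r s : ZMod 2, p + q = r + s →
      (if p = 1 then (-1 : ℤ) else 1) * (if q = 1 then -1 else 1)
        = (if r = 1 then -1 else 1) * (if s = 1 then -1 else 1) := by decide
  exact key _ _ _ _ hp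

section Mdeg

variable {n : ℕ} {K A : Type*} [Field K] [Ring A] [Algebra K A]
  {𝒜 : Gamma n → Submodule K A} {ι : Type*} {w : ι → Gamma n}

theorem Mdeg.mul [Fintype ι] [GradedAlgebra 𝒜] {u v : Gamma n} {U V : Matrix ι ι A}
    (hU : Mdeg 𝒜 w u U) (hV : Mdeg 𝒜 w v V) : Mdeg 𝒜 w (u + v) (U * V) := by
  intro α β
  refine Submodule.sum_mem _ fun γ _ => ?_
  have hdeg : (w α + w γ + u) + (w γ + w β + v) = w α + w β + (u + v) := by
    rw [← sub_eq_zero, ← Gamma.add_self (w γ)]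
    abel
  exact hdeg ▸ SetLike.mul_mem_graded (hU α γ) (hV γ β)

theorem Mdeg.one [DecidableEq ι] [GradedAlgebra 𝒜] : Mdeg 𝒜 w 0 (1 : Matrix ι ι A) := by
  intro α β
  rcases eq_or_ne α β with rfl | hne
  · simpa [Gamma.add_self] using SetLike.one_mem_graded 𝒜
  · rw [one_apply_ne hne]
    exact zero_mem _

theorem Mdeg.pow [Fintype ι] [DecidableEq ι] [GradedAlgebra 𝒜] {u : Gamma n}
    {U : Matrix ι ι A} (hU : Mdeg 𝒜 w u U) (k : ℕ) : Mdeg 𝒜 w (k • u) (U ^ k) := by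
  induction k with
  | zero => rw [pow_zero, zero_smul]; exact Mdeg.one
  | succ k ih => rw [pow_succ, succ_nsmul]; exact ih.mul hU

theorem Mdeg.sub {u : Gamma n} {U V : Matrix ι ι A}
    (hU : Mdeg 𝒜 w u U) (hV : Mdeg 𝒜 w u V) : Mdeg 𝒜 w u (U - V) :=
  fun α β => sub_mem (hU α β) (hV α β)

theorem Mdeg.zsmul {u : Gamma n} {U : Matrix ι ι A} (c : ℤ) (hU : Mdeg 𝒜 w u U) :
    Mdeg 𝒜 w u (c • U) :=
  fun α β => zsmul_mem (hU α β) c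

theorem Mdeg.gradedCommutator [Fintype ι] [GradedAlgebra 𝒜] {u v : Gamma n}
    {U V : Matrix ι ι A} (hU : Mdeg 𝒜 w u U) (hV : Mdeg 𝒜 w v V) :
    Mdeg 𝒜 w (u + v) (U * V - gsign u v • (V * U)) :=
  hU.mul hV |>.sub <| .zsmul _ <| add_comm v u ▸ hV.mul hU

theorem Mdeg.eq_zero_of_ne [GradedAlgebra 𝒜] {u v : Gamma n}
    {U : Matrix ι ι A} (hu : Mdeg 𝒜 w u U) (hv : Mdeg 𝒜 w v U) (huv : u ≠ v) : U = 0 := by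
  ext α β
  have hne : w α + w β + u ≠ w α + w β + v := fun h => huv (add_left_cancel h)
  have h := DirectSum.decompose_of_mem_same 𝒜 (hv α β)
  rwa [DirectSum.decompose_of_mem_ne 𝒜 (hu α β) hne, eq_comm] at h

end Mdeg

section gtr

variable {n : ℕ} {ι A : Type*} [Fintype ι] [Ring A] (w : ι → Gamma n)

theorem gtr_sub (z : Gamma n) (P Q : Matrix ι ι A) :
    gtr w z (P - Q) = gtr w z P - gtr w z Q := by
  simp [gtr, smul_sub, Finset.sum_sub_distrib]

theorem gtr_zero (z : Gamma n) : gtr w z (0 : Matrix ι ι A) = 0 := by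
  simp [gtr]

theorem gtr_mul_comm {K : Type*} [Field K] [Algebra K A] {𝒜 : Gamma n → Submodule K A}
    (hcomm : GradedComm 𝒜) {u v : Gamma n} {U V : Matrix ι ι A}
    (hU : Mdeg 𝒜 w u U) (hV : Mdeg 𝒜 w v V) :
    gtr w (u + v) (U * V) = gsign u v • gtr w (u + v) (V * U) := by
  have hswap : ∀ α β, U α β * V β α
      = gsign (w α + w β + u) (w β + w α + v) • (V β α * U α β) := fun α β => by
    rw [hcomm _ _ _ _ (hU α β) (hV β α), smul_smul, gsign_mul_self, one_smul]
  simp only [gtr, mul_apply, Finset.smul_sum, hswap, smul_smul]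
  rw [Finset.sum_comm]
  refine Finset.sum_congr rfl fun β _ => Finset.sum_congr rfl fun α _ => ?_
  refine congrArg (· • _) (gsign_mul_gsign_eq ?_)
  simp only [gpair, ← Finset.sum_add_distrib]
  refine Finset.sum_congr rfl fun i _ => ?_
  have key : ∀ p q r s : ZMod 2,
      (p + (r + s)) * p + (p + q + r) * (q + p + s) = r * s + (q + (r + s)) * q := by decide
  exact key (w α i) (w β i) (u i) (v i)

end gtr

theorem sum_range_pow_mul_commutator_mul_pow {R : Type*} [Ring R] (a b : R) (k : ℕ) :
    ∑ i ∈ Finset.range k, a ^ (k.pred - i) * (a * b - b * a) * a ^ i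
      = a ^ k * b - b * a ^ k := by
  have hterm : ∀ i ∈ Finset.range k, a ^ (k.pred - i) * (a * b - b * a) * a ^ i
      = a ^ (k - i) * b * a ^ i - a ^ (k - (i + 1)) * b * a ^ (i + 1) := fun i hi => by
    obtain ⟨j, rfl⟩ : ∃ j, k = i + j + 1 := ⟨k - i - 1, by grind⟩
    simp only [Nat.pred_eq_sub_one, show i + j + 1 - 1 - i = j by omega,
      show i + j + 1 - i = j + 1 by omega, show i + j + 1 - (i + 1) = j by omega,
      pow_succ a j, pow_succ' a i]
    noncomm_ring
  rw [Finset.sum_congr rfl hterm, Finset.sum_range_sub' (fun i => a ^ (k - i) * b * a ^ i)]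
  simp

section Deriv

-- The ℓ∞-operator norm makes `HasDerivAt.fun_pow'` available for matrices; it induces the
-- product topology, so `HasDerivAt` for matrices is entrywise.
attribute [local instance] Matrix.linftyOpNormedRing Matrix.linftyOpNormedAlgebra

variable {𝕜 ι A : Type*} [NontriviallyNormedField 𝕜] [Fintype ι] [DecidableEq ι]
  [NormedRing A] [NormedAlgebra 𝕜 A]

theorem Matrix.hasDerivAt_iff {X : 𝕜 → Matrix ι ι A} {X' : Matrix ι ι A} {t : 𝕜} :
    HasDerivAt X X' t ↔ ∀ i j, HasDerivAt (fun s => X s i j) (X' i j) t := by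
  refine hasDerivAt_iff_tendsto_slope.trans <| tendsto_pi_nhds.trans <| forall_congr' fun i =>
    tendsto_pi_nhds.trans <| forall_congr' fun j => ?_
  exact hasDerivAt_iff_tendsto_slope.symm

theorem hasDerivAt_gtr_pow {n : ℕ} (w : ι → Gamma n) (z : Gamma n) {X : 𝕜 → Matrix ι ι A}
    {X' : Matrix ι ι A} {t : 𝕜} (hX : ∀ i j, HasDerivAt (fun s => X s i j) (X' i j) t)
    (k : ℕ) :
    HasDerivAt (fun s => gtr w z (X s ^ k))
      (gtr w z (∑ i ∈ Finset.range k, X t ^ (k.pred - i) * X' * X t ^ i)) t := by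
  have hpow := Matrix.hasDerivAt_iff.mp ((Matrix.hasDerivAt_iff.mpr hX).fun_pow' k)
  exact HasDerivAt.fun_sum fun α _ => (hpow α α).fun_const_smul _

end Deriv

theorem HasDerivAt.mem_of_forall_mem {𝕜 F : Type*} [NontriviallyNormedField 𝕜]
    [NormedAddCommGroup F] [NormedSpace 𝕜 F] {f : 𝕜 → F} {f' : F} {t : 𝕜} {S : Submodule 𝕜 F}
    (hS : IsClosed (S : Set F)) (hf : ∀ s, f s ∈ S) (h : HasDerivAt f f' t) : f' ∈ S :=
  hS.mem_of_tendsto (hasDerivAt_iff_tendsto_slope.mp h) <| .of_forall fun s => by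
    rw [slope_def_module]
    exact S.smul_mem _ (S.sub_mem (hf s) (hf t))

theorem Mdeg.of_hasDerivAt {𝕜 ι A : Type*} [NontriviallyNormedField 𝕜] [CompleteSpace 𝕜]
    [NormedRing A] [NormedAlgebra 𝕜 A] [FiniteDimensional 𝕜 A] {n : ℕ}
    {𝒜 : Gamma n → Submodule 𝕜 A} {w : ι → Gamma n} {x : Gamma n} {X : 𝕜 → Matrix ι ι A}
    {X' : Matrix ι ι A} {t : 𝕜} (hX : ∀ s, Mdeg 𝒜 w x (X s))
    (h : ∀ i j, HasDerivAt (fun s => X s i j) (X' i j) t) : Mdeg 𝒜 w x X' :=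
  fun α β => (h α β).mem_of_forall_mem (Submodule.closed_of_finiteDimensional _) (hX · α β)

theorem lax_first_integrals_general {n N : ℕ}
    {A : Type*} [NormedRing A] [NormedAlgebra ℝ A] [FiniteDimensional ℝ A]
    (𝒜 : Gamma n → Submodule ℝ A) [GradedAlgebra 𝒜] (hcomm : GradedComm 𝒜)
    (w : Fin N → Gamma n) (x y : Gamma n)
    (X Y : ℝ → Matrix (Fin N) (Fin N) A)
    (hX : ∀ t, Mdeg 𝒜 w x (X t)) (hY : ∀ t, Mdeg 𝒜 w y (Y t))
    (hder : ∀ (t : ℝ) (α β : Fin N), HasDerivAt (fun s => X s α β)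
      ((X t * Y t - gsign x y • (Y t * X t)) α β) t) :
    ∀ k : ℕ, 1 ≤ k → ∀ t₁ t₂ : ℝ,
      gtr w (k • x) (X t₁ ^ k) = gtr w (k • x) (X t₂ ^ k) := by
  intro k _ t₁ t₂
  set D := fun t => X t * Y t - gsign x y • (Y t * X t)
  have hderiv_zero : ∀ t,
      gtr w (k • x) (∑ i ∈ Finset.range k, X t ^ (k.pred - i) * D t * X t ^ i) = 0 := by
    intro t
    by_cases hy : y = 0
    · subst hy
      simp only [D, gsign_zero_right, one_smul, sum_range_pow_mul_commutator_mul_pow, gtr_sub]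
      rw [← add_zero (k • x), gtr_mul_comm w hcomm ((hX t).pow k) (hY t), gsign_zero_right,
        one_smul, sub_self]
    · have hD : D t = 0 := Mdeg.eq_zero_of_ne (Mdeg.of_hasDerivAt hX (hder t))
        ((hX t).gradedCommutator (hY t)) (by simpa using hy)
      simp [hD, gtr_zero]
  have hgtr := fun t => hasDerivAt_gtr_pow w (k • x) (hder t) k
  exact is_const_of_deriv_eq_zero (fun t => (hgtr t).differentiableAt)
    (fun t => (hgtr t).deriv.trans (hderiv_zero t)) t₁ t₂

/-- **Lax pairs and first integrals** (Corollary).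
If `X(t) ∈ M^x(w)` with `x` even satisfies the Lax equation `dX/dt = [X, Y]` with
`Y(t) ∈ M^y(w)`, then all the graded traces `Γtr((X t)^k)`, `k ≥ 1`, are independent
of `t`. -/
theorem lax_first_integrals {n N : ℕ} (hn : 1 ≤ n) (hN : 1 ≤ N)
    {A : Type*} [NormedRing A] [NormedAlgebra ℝ A] [FiniteDimensional ℝ A]
    (𝒜 : Gamma n → Submodule ℝ A) [GradedAlgebra 𝒜] (hcomm : GradedComm 𝒜)
    (w : Fin N → Gamma n) (x y : Gamma n) (hx : GammaEven x)
    (X Y : ℝ → Matrix (Fin N) (Fin N) A)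
    (hX : ∀ t, Mdeg 𝒜 w x (X t)) (hY : ∀ t, Mdeg 𝒜 w y (Y t))
    (hder : ∀ (t : ℝ) (α β : Fin N), HasDerivAt (fun s => X s α β)
      ((X t * Y t - gsign x y • (Y t * X t)) α β) t) :
    ∀ k : ℕ, 1 ≤ k → ∀ t₁ t₂ : ℝ,
      gtr w (k • x) (X t₁ ^ k) = gtr w (k • x) (X t₂ ^ k) :=
  lax_first_integrals_general 𝒜 hcomm w x y X Y hX hY hder
end

section
/- Determinant identity for elementary off-diagonal blocks, odd case (Lemma): Let u : Fin N₁ → Γ be a weight map all of whose values are even and v : Fin N₂ → Γ a weight map all of whose values are odd, and let D_u and D_v be maps satisfying the graded-determinant axioms for u and for v (with the same linear order ≼ on Γ). Let P : Matrix (Fin N₁) (Fin N₂) A satisfy P α j ∈ 𝒜 (u α + v j) for all α, j, and let Q : Matrix (Fin N₂) (Fin N₁) A satisfy Q j α ∈ 𝒜 (v j + u α) for all j, α. If P has at most one nonzero entry, or Q has at most one nonzero entry, then 1 − P * Q is a degree-zero graded matrix for u, 1 + Q * P is a degree-zero graded matrix for v, and D_u(1 − P * Q) = D_v(1 + Q *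 P). -/
open Matrix

/-- Leibniz determinant over a (not necessarily commutative) ring, with the product
taken in the order given by the linear order on the index type. -/
def listDet {ι : Type*} [Fintype ι] [LinearOrder ι] {A : Type*} [Ring A]
    (X : Matrix ι ι A) : A :=
  ∑ σ : Equiv.Perm ι, (Equiv.Perm.sign σ : ℤ) •
    ((Finset.sort Finset.univ (· ≤ ·)).map fun i => X (σ i) i).prod

/-- The product over the values `γ` in the range of `v` (ordered by `lo`) of the ordinary
determinants of the diagonal blocks `{α | v α = γ}` of `X`. -/
def detProd {n : ℕ} (lo : LinearOrder (Gamma n)) {ι : Type*} [Fintype ι] [LinearOrder ι]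
    {A : Type*} [Ring A] (v : ι → Gamma n) (X : Matrix ι ι A) : A :=
  letI : LinearOrder (Gamma n) := lo
  ((Finset.sort (Finset.image v Finset.univ) (· ≤ ·)).map fun γ =>
    listDet (Matrix.of fun a b : {α : ι // v α = γ} => X a.1 b.1)).prod

/-- The graded-determinant axioms for a map `D` on degree-zero graded matrices with weight
map `v` and a fixed linear order `lo` on `Γ`: `D` is valued in `𝒜 0`, is multiplicative,
equals the product of the ordinary block determinants on block-diagonal matrices, and
equals `1` on block-unitriangular matrices. -/
def DetAxioms {n : ℕ} {K A : Type*} [Field K] [Ring A] [Algebra K A]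
    (𝒜 : Gamma n → Submodule K A) (lo : LinearOrder (Gamma n))
    {ι : Type*} [Fintype ι] [LinearOrder ι] (v : ι → Gamma n)
    (D : Matrix ι ι A → A) : Prop :=
  (∀ X, Mdeg0 𝒜 v X → D X ∈ 𝒜 0) ∧
  (∀ X Y, Mdeg0 𝒜 v X → Mdeg0 𝒜 v Y → D (X * Y) = D X * D Y) ∧
  (∀ X, Mdeg0 𝒜 v X → (∀ α β, v α ≠ v β → X α β = 0) → D X = detProd lo v X) ∧
  (∀ X, Mdeg0 𝒜 v X → (∀ α β, v α = v β → X α β = if α = β then (1 : A) else 0) →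
    ((∀ α β, lo.lt (v α) (v β) → X α β = 0) ∨ (∀ α β, lo.lt (v β) (v α) → X α β = 0)) →
    D X = 1)

/-- A matrix is elementary if it has at most one nonzero entry. -/
def Elementary {ι κ A : Type*} [Zero A] (P : Matrix ι κ A) : Prop :=
  ∀ α j α' j', P α j ≠ 0 → P α' j' ≠ 0 → α = α' ∧ j = j'

theorem Gamma.add_add_add_cancel {n : ℕ} (γ δ ε : Gamma n) : γ + δ + (δ + ε) = γ + ε := by
  rw [add_assoc, ← add_assoc δ, Gamma.add_self, zero_add]

theorem gpair_add_self {n : ℕ} (γ δ : Gamma n) :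
    gpair (γ + δ) (γ + δ) = gpair γ γ + gpair δ δ := by
  simp only [gpair, Pi.add_apply, ← Finset.sum_add_distrib]
  exact Finset.sum_congr rfl fun i _ =>
    (by decide : ∀ a b : ZMod 2, (a + b) * (a + b) = a * a + b * b) _ _

theorem gpair_add_self_eq_one {n : ℕ} {γ δ : Gamma n} (hγ : GammaEven γ) (hδ : ¬ GammaEven δ) :
    gpair (γ + δ) (γ + δ) = 1 := by
  rw [gpair_add_self, hγ, zero_add]
  exact (by decide : ∀ x : ZMod 2, x ≠ 0 → x = 1) _ hδ

section GradedAlgebra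

variable {n : ℕ} {K A : Type*} [Field K] [Ring A] [Algebra K A] {𝒜 : Gamma n → Submodule K A}

theorem GradedComm.mul_comm_of_gpair_eq_one (hcomm : GradedComm 𝒜) {γ δ : Gamma n} {x y : A}
    (hx : x ∈ 𝒜 γ) (hy : y ∈ 𝒜 δ) (hγδ : gpair γ δ = 1) : y * x = -(x * y) := by
  rw [hcomm γ δ x y hx hy, gsign, if_pos hγδ, neg_smul, one_smul]

theorem GradedComm.mul_self_eq_zero [CharZero K] (hcomm : GradedComm 𝒜) {γ : Gamma n} {x : A}
    (hx : x ∈ 𝒜 γ) (hγ : gpair γ γ = 1) : x * x = 0 := by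
  have h2 : (2 : K) • (x * x) = 0 := by
    rw [two_smul]
    nth_rewrite 1 [hcomm.mul_comm_of_gpair_eq_one hx hx hγ]
    exact neg_add_cancel _
  exact (smul_eq_zero.1 h2).resolve_left two_ne_zero

theorem GradedComm.mul_mul_eq_zero (hcomm : GradedComm 𝒜) {γ δ : Gamma n} {x y z : A}
    (hx : x ∈ 𝒜 γ) (hz : z ∈ 𝒜 δ) (hxy : x * y = 0) : x * z * y = 0 := by
  rw [hcomm δ γ z x hz hx, smul_mul_assoc, mul_assoc, hxy, mul_zero, smul_zero]

theorem Elementary.mul_eq_zero {ι κ : Type*} {P : Matrix ι κ A} (hP : Elementary P)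
    (hsq : ∀ a j, P a j * P a j = 0) (a j c l) : P a j * P c l = 0 := by
  by_cases ha : P a j = 0
  · rw [ha, zero_mul]
  by_cases hc : P c l = 0
  · rw [hc, mul_zero]
  obtain ⟨rfl, rfl⟩ := hP a j c l ha hc
  exact hsq a j

theorem Elementary.mul_mul_eq_zero [CharZero K] (hcomm : GradedComm 𝒜) {ι κ : Type*}
    {P : Matrix ι κ A} (hP : Elementary P) {d : ι → κ → Gamma n} (hPd : ∀ a j, P a j ∈ 𝒜 (d a j))
    (hodd : ∀ a j, gpair (d a j) (d a j) = 1) {δ : Gamma n} {z : A} (hz : z ∈ 𝒜 δ) (a j c l) :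
    P a j * z * P c l = 0 :=
  hcomm.mul_mul_eq_zero (hPd a j) hz
    (hP.mul_eq_zero (fun a j => hcomm.mul_self_eq_zero (hPd a j) (hodd a j)) a j c l)

end GradedAlgebra

def restrictEntries {ι A : Type*} [Zero A] (p : ι → ι → Prop) [DecidableRel p]
    (E : Matrix ι ι A) : Matrix ι ι A :=
  of fun a b => if p a b then E a b else 0

theorem restrictEntries_apply_mul_apply {ι A : Type*} [MulZeroClass A] {E : Matrix ι ι A}
    (hE : ∀ a b c d, E a b * E c d = 0) (p q : ι → ι → Prop) [DecidableRel p] [DecidableRel q]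
    (a b c d : ι) : restrictEntries p E a b * restrictEntries q E c d = 0 := by
  simp only [restrictEntries, of_apply]
  split_ifs <;> simp [hE]

theorem restrictEntries_mul_restrictEntries {ι A : Type*} [Fintype ι]
    [NonUnitalNonAssocSemiring A] {E : Matrix ι ι A} (hE : ∀ a b c d, E a b * E c d = 0)
    (p q : ι → ι → Prop) [DecidableRel p] [DecidableRel q] :
    restrictEntries p E * restrictEntries q E = 0 := by
  ext a b
  exact Finset.sum_eq_zero fun k _ => restrictEntries_apply_mul_apply hE p q a k k b

section GradedMatrices

variable {n : ℕ} {K A : Type*} [Field K] [Ring A] [Algebra K A] {𝒜 : Gamma n → Submodule K A}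
  {ι : Type*} {w : ι → Gamma n}

theorem Matrix.mul_apply_mem_graded [SetLike.GradedMul 𝒜] {κ : Type*} [Fintype κ]
    {u : ι → Gamma n} {v : κ → Gamma n} {P : Matrix ι κ A} {Q : Matrix κ ι A}
    (hP : ∀ a j, P a j ∈ 𝒜 (u a + v j)) (hQ : ∀ j b, Q j b ∈ 𝒜 (v j + w b)) (a b : ι) :
    (P * Q) a b ∈ 𝒜 (u a + w b) := by
  rw [mul_apply]
  refine Submodule.sum_mem _ fun j _ => ?_
  simpa only [Gamma.add_add_add_cancel] using SetLike.mul_mem_graded (hP a j) (hQ j b)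

theorem mdeg0_one [DecidableEq ι] [SetLike.GradedOne 𝒜] : Mdeg0 𝒜 w 1 := fun a b => by
  rcases eq_or_ne a b with rfl | hab
  · simpa [Gamma.add_self] using SetLike.one_mem_graded 𝒜
  · simp [one_apply_ne hab]

theorem Mdeg0.add {X Y : Matrix ι ι A} (hX : Mdeg0 𝒜 w X) (hY : Mdeg0 𝒜 w Y) :
    Mdeg0 𝒜 w (X + Y) := fun a b => Submodule.add_mem _ (hX a b) (hY a b)

theorem Mdeg0.neg {X : Matrix ι ι A} (hX : Mdeg0 𝒜 w X) : Mdeg0 𝒜 w (-X) :=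
  fun a b => Submodule.neg_mem _ (hX a b)

theorem Mdeg0.mul [Fintype ι] [SetLike.GradedMul 𝒜] {X Y : Matrix ι ι A} (hX : Mdeg0 𝒜 w X)
    (hY : Mdeg0 𝒜 w Y) : Mdeg0 𝒜 w (X * Y) :=
  Matrix.mul_apply_mem_graded hX hY

theorem Mdeg0.restrictEntries {E : Matrix ι ι A} (hE : Mdeg0 𝒜 w E) (p : ι → ι → Prop)
    [DecidableRel p] : Mdeg0 𝒜 w (restrictEntries p E) := fun a b => by
  simp only [_root_.restrictEntries, of_apply]
  split_ifs
  exacts [hE a b, Submodule.zero_mem _]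

end GradedMatrices

section ListProducts

variable {ι A : Type*} [Ring A]

theorem List.prod_map_one_add_of_mul_eq_zero (f : ι → A) (hf : ∀ i j, f i * f j = 0) :
    ∀ l : List ι, (l.map fun i => 1 + f i).prod = 1 + (l.map f).sum
  | [] => by simp
  | i :: l => by
    have hfl : f i * (l.map f).sum = 0 := by
      rw [← List.sum_map_mul_left]; exact List.sum_eq_zero (by simp [hf])
    rw [List.map_cons, List.prod_cons, List.prod_map_one_add_of_mul_eq_zero f hf l,
      List.map_cons, List.sum_cons, add_mul, mul_add, mul_add, hfl]
    noncomm_ring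

variable {S : Set A}

theorem List.mul_prod_mul_eq_zero (hS : ∀ x ∈ S, ∀ y ∈ S, x * y = 0) {x y : A}
    (hx : x ∈ S) (hy : y ∈ S) : ∀ m : List A, (∀ t ∈ m, t ∈ S ∨ t - 1 ∈ S) →
      x * m.prod * y = 0
  | [], _ => by simpa using hS x hx y hy
  | t :: m, hm => by
    have ih := List.mul_prod_mul_eq_zero hS hx hy m fun t' ht' =>
      hm t' (List.mem_cons_of_mem _ ht')
    rcases hm t List.mem_cons_self with ht | ht
    · rw [List.prod_cons, ← mul_assoc, hS x hx t ht, zero_mul, zero_mul]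
    · calc x * (t :: m).prod * y = x * m.prod * y + x * (t - 1) * m.prod * y := by
            rw [List.prod_cons]; noncomm_ring
        _ = 0 := by rw [ih, hS x hx _ ht, zero_mul, zero_mul, add_zero]

theorem List.prod_map_eq_zero_of_mem_of_mem (hS : ∀ x ∈ S, ∀ y ∈ S, x * y = 0) {g : ι → A}
    {l : List ι} (hl : ∀ k ∈ l, g k ∈ S ∨ g k - 1 ∈ S) {i j : ι} (hi : i ∈ l) (hj : j ∈ l)
    (hij : i ≠ j) (hgi : g i ∈ S) (hgj : g j ∈ S) : (l.map g).prod = 0 := by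
  have hsandwich : ∀ {a b : ι} {m : List ι}, g a ∈ S → g b ∈ S → (∀ k ∈ m, k ∈ l) →
      g a * (m.map g).prod * g b = 0 := fun ha hb hm =>
    List.mul_prod_mul_eq_zero hS ha hb _ (by simpa using fun k hk => hl k (hm k hk))
  obtain ⟨s, t, rfl⟩ := List.append_of_mem hi
  rcases List.mem_append.1 hj with hjs | hjt
  · obtain ⟨s₁, s₂, rfl⟩ := List.append_of_mem hjs
    calc ((s₁ ++ j :: s₂ ++ i :: t).map g).prod
        = (s₁.map g).prod * (g j * (s₂.map g).prod * g i) * (t.map g).prod := by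
          simp [mul_assoc]
      _ = 0 := by rw [hsandwich hgj hgi (by simp_all), mul_zero, zero_mul]
  · obtain ⟨t₁, t₂, rfl⟩ := List.append_of_mem ((List.mem_cons.1 hjt).resolve_left hij.symm)
    calc ((s ++ i :: (t₁ ++ j :: t₂)).map g).prod
        = (s.map g).prod * (g i * (t₁.map g).prod * g j) * (t₂.map g).prod := by
          simp [mul_assoc]
      _ = 0 := by rw [hsandwich hgi hgj (by simp_all), mul_zero, zero_mul]

end ListProducts

theorem Finset.sum_map_sort {α M : Type*} [AddCommMonoid M] (s : Finset α) (r : α → α → Prop)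
    [DecidableRel r] [IsTrans α r] [Std.Antisymm r] [Std.Total r] (f : α → M) :
    ((s.sort r).map f).sum = ∑ a ∈ s, f a := by
  rw [Finset.sum_eq_multiset_sum, ← Finset.sort_eq s r, Multiset.map_coe, Multiset.sum_coe]

theorem listDet_one_add {ι A : Type*} [Fintype ι] [LinearOrder ι] [Ring A] (N : Matrix ι ι A)
    (hN : ∀ a b c d, N a b * N c d = 0) : listDet (1 + N) = 1 + trace N := by
  set S : Set A := Set.range fun p : ι × ι => N p.1 p.2
  have hS : ∀ x ∈ S, ∀ y ∈ S, x * y = 0 := by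
    rintro _ ⟨⟨a, b⟩, rfl⟩ _ ⟨⟨c, d⟩, rfl⟩; exact hN a b c d
  have hmem : ∀ a b, N a b ∈ S := fun a b => ⟨(a, b), rfl⟩
  unfold listDet
  rw [Finset.sum_eq_single (1 : Equiv.Perm ι) ?_ (by simp)]
  · simp only [Equiv.Perm.sign_one, Units.val_one, one_smul, Equiv.Perm.one_apply,
      Matrix.add_apply, one_apply_eq]
    rw [List.prod_map_one_add_of_mul_eq_zero _ (fun i j => hN i i j j), Finset.sum_map_sort,
      trace]; rfl
  · intro σ _ hσ
    obtain ⟨i, hi⟩ : ∃ i, σ i ≠ i := by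
      by_contra! h
      exact hσ (Equiv.ext h)
    have hσi : σ (σ i) ≠ σ i := fun h => hi (σ.injective h)
    have hoff : ∀ k, σ k ≠ k → (1 + N) (σ k) k ∈ S := fun k hk => by
      simpa [one_apply_ne hk] using hmem (σ k) k
    have hsort : ∀ k : ι, k ∈ (Finset.univ : Finset ι).sort (· ≤ ·) := fun k =>
      Finset.mem_sort _ |>.2 (Finset.mem_univ k)
    rw [List.prod_map_eq_zero_of_mem_of_mem hS (g := fun k => (1 + N) (σ k) k) ?_ (hsort i)
      (hsort (σ i)) hi.symm (hoff i hi) (hoff _ hσi), smul_zero]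
    intro k _
    by_cases hk : σ k = k
    · right; simpa [hk] using hmem k k
    · exact Or.inl (hoff k hk)

theorem detProd_one_add {n : ℕ} (lo : LinearOrder (Gamma n)) {ι A : Type*} [Fintype ι]
    [LinearOrder ι] [Ring A] (w : ι → Gamma n) (E : Matrix ι ι A)
    (hE : ∀ a b c d, E a b * E c d = 0) : detProd lo w (1 + E) = 1 + trace E := by
  set block : Gamma n → A := fun γ => trace (of fun a b : {α // w α = γ} => E a.1 b.1)
  have hblock : ∀ γ, listDet (of fun a b : {α // w α = γ} => (1 + E) a.1 b.1) = 1 + block γ :=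
    fun γ => by
      rw [← listDet_one_add (of fun a b : {α // w α = γ} => E a.1 b.1) fun a b c d => hE a b c d]
      congr 1
      ext a b
      simp [Matrix.one_apply, Subtype.ext_iff]
  have hblock_mul : ∀ γ δ, block γ * block δ = 0 := fun γ δ => by
    simp only [block, trace, Finset.sum_mul_sum]
    exact Finset.sum_eq_zero fun _ _ => Finset.sum_eq_zero fun _ _ => hE _ _ _ _
  have hblock_sum : ∑ γ ∈ Finset.image w Finset.univ, block γ = trace E := by
    rw [Finset.sum_subset (Finset.subset_univ _), trace]
    · exact Fintype.sum_fiberwise w fun α => E α α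
    · intro γ _ hγ
      have : IsEmpty {α // w α = γ} := ⟨fun a => hγ (Finset.mem_image.2 ⟨a.1, by simp, a.2⟩)⟩
      simp [block, trace]
  unfold detProd
  simp only [hblock]
  rw [List.prod_map_one_add_of_mul_eq_zero _ hblock_mul, Finset.sum_map_sort, hblock_sum]

namespace DetAxioms

variable {n : ℕ} {K A : Type*} [Field K] [Ring A] [Algebra K A] {𝒜 : Gamma n → Submodule K A}
  {lo : LinearOrder (Gamma n)} {ι : Type*} [Fintype ι] [LinearOrder ι] {w : ι → Gamma n}
  {D : Matrix ι ι A → A}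

theorem apply_one_add_eq_one (hD : DetAxioms 𝒜 lo w D) {X : Matrix ι ι A}
    (hX : Mdeg0 𝒜 w (1 + X))
    (htri : (∀ a b, ¬ lo.lt (w b) (w a) → X a b = 0) ∨ (∀ a b, ¬ lo.lt (w a) (w b) → X a b = 0)) :
    D (1 + X) = 1 := by
  let _ := lo
  have hlt_ne : ∀ {a b}, w a < w b → a ≠ b := fun h hab => (ne_of_lt h) (congrArg w hab)
  refine hD.2.2.2 _ hX (fun a b hab => ?_) ?_
  · have : X a b = 0 := by
      rcases htri with h | h <;> exact h a b (by rw [hab]; exact lt_irrefl _)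
    rw [Matrix.add_apply, this, add_zero, one_apply]
  · refine htri.imp (fun h a b hab => ?_) (fun h a b hab => ?_)
    · rw [Matrix.add_apply, one_apply_ne (hlt_ne hab), h a b (lt_asymm hab), zero_add]
    · rw [Matrix.add_apply, one_apply_ne (hlt_ne hab).symm, h a b (lt_asymm hab), zero_add]

theorem apply_one_add [SetLike.GradedMonoid 𝒜] (hD : DetAxioms 𝒜 lo w D) {E : Matrix ι ι A}
    (hE : Mdeg0 𝒜 w E) (hEE : ∀ a b c d, E a b * E c d = 0) : D (1 + E) = 1 + trace E := by
  classical
  let _ := lo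
  set L := restrictEntries (fun a b => w b < w a) E
  set M := restrictEntries (fun a b => w a = w b) E
  set U := restrictEntries (fun a b => w a < w b) E
  have hdeg : ∀ (p : ι → ι → Prop) [DecidableRel p], Mdeg0 𝒜 w (1 + restrictEntries p E) :=
    fun p _ => mdeg0_one.add (hE.restrictEntries p)
  have hsplit : L + M + U = E := by
    ext a b
    simp only [L, M, U, restrictEntries, Matrix.add_apply, of_apply]
    rcases lt_trichotomy (w a) (w b) with h | h | h
    · simp [h, lt_asymm h, ne_of_lt h]
    · simp [h]
    · simp [h, lt_asymm h, (ne_of_lt h).symm]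
  have hfactor : (1 + L) * (1 + M) * (1 + U) = 1 + E := by
    have hLM : L * M = 0 := restrictEntries_mul_restrictEntries hEE _ _
    have hLU : L * U = 0 := restrictEntries_mul_restrictEntries hEE _ _
    have hMU : M * U = 0 := restrictEntries_mul_restrictEntries hEE _ _
    rw [← hsplit]
    simp only [add_mul, mul_add, one_mul, mul_one, hLM, hLU, hMU, add_zero]
    abel
  have hL : D (1 + L) = 1 := hD.apply_one_add_eq_one (hdeg _) (Or.inl fun a b h => if_neg h)
  have hU : D (1 + U) = 1 := hD.apply_one_add_eq_one (hdeg _) (Or.inr fun a b h => if_neg h)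
  have hM : D (1 + M) = 1 + trace E := by
    rw [hD.2.2.1 _ (hdeg _) fun a b hab => ?_,
      detProd_one_add lo w M (restrictEntries_apply_mul_apply hEE _ _)]
    · simp [M, trace, restrictEntries]
    · simp [restrictEntries, hab, one_apply_ne (ne_of_apply_ne w hab)]
  rw [← hfactor, hD.2.1 _ _ ((hdeg _).mul (hdeg _)) (hdeg _), hD.2.1 _ _ (hdeg _) (hdeg _), hL,
    hM, hU, one_mul, mul_one]

end DetAxioms

section MatrixProducts

variable {ι κ A : Type*} [Fintype ι] [Fintype κ] [Ring A] {P : Matrix ι κ A} {Q : Matrix κ ι A}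

theorem Matrix.trace_mul_eq_neg_trace_mul (h : ∀ a j, Q j a * P a j = -(P a j * Q j a)) :
    trace (Q * P) = -trace (P * Q) := by
  simp only [trace, diag, mul_apply, h, Finset.sum_neg_distrib]
  rw [Finset.sum_comm]

theorem Matrix.mul_apply_mul_mul_apply_eq_zero (hPQP : ∀ a j k b c l, P a j * Q k b * P c l = 0) :
    (∀ a b c d, (P * Q) a b * (P * Q) c d = 0) ∧ (∀ a b c d, (Q * P) a b * (Q * P) c d = 0) := by
  constructor <;> intro a b c d <;> simp only [mul_apply, Finset.sum_mul_sum] <;>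
    refine Finset.sum_eq_zero fun j _ => Finset.sum_eq_zero fun k _ => ?_
  · rw [← mul_assoc, hPQP, zero_mul]
  · rw [mul_assoc, ← mul_assoc (P j b), hPQP, mul_zero]

end MatrixProducts

theorem graded_det_elementary_odd_general {n N₁ N₂ : ℕ}
    {K A : Type*} [Field K] [CharZero K] [Ring A] [Algebra K A]
    (𝒜 : Gamma n → Submodule K A) [GradedAlgebra 𝒜] (hcomm : GradedComm 𝒜)
    (u : Fin N₁ → Gamma n) (hu : ∀ α, GammaEven (u α))
    (v : Fin N₂ → Gamma n) (hv : ∀ j, ¬ GammaEven (v j))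
    (lo : LinearOrder (Gamma n))
    (Du : Matrix (Fin N₁) (Fin N₁) A → A) (hDu : DetAxioms 𝒜 lo u Du)
    (Dv : Matrix (Fin N₂) (Fin N₂) A → A) (hDv : DetAxioms 𝒜 lo v Dv)
    (P : Matrix (Fin N₁) (Fin N₂) A) (hP : ∀ α j, P α j ∈ 𝒜 (u α + v j))
    (Q : Matrix (Fin N₂) (Fin N₁) A) (hQ : ∀ j α, Q j α ∈ 𝒜 (v j + u α))
    (hel : Elementary P ∨ Elementary Q) :
    Mdeg0 𝒜 u (1 - P * Q) ∧ Mdeg0 𝒜 v (1 + Q * P) ∧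
      Du (1 - P * Q) = Dv (1 + Q * P) := by
  have hoddP : ∀ α j, gpair (u α + v j) (u α + v j) = 1 :=
    fun α j => gpair_add_self_eq_one (hu α) (hv j)
  have hoddQ : ∀ j α, gpair (v j + u α) (v j + u α) = 1 :=
    fun j α => add_comm (u α) (v j) ▸ hoddP α j
  have hPQ : Mdeg0 𝒜 u (-(P * Q)) := Mdeg0.neg (Matrix.mul_apply_mem_graded hP hQ)
  have hQP : Mdeg0 𝒜 v (Q * P) := Matrix.mul_apply_mem_graded hQ hP
  obtain ⟨hPQ_sq, hQP_sq⟩ :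
      (∀ a b c d, (P * Q) a b * (P * Q) c d = 0) ∧ (∀ a b c d, (Q * P) a b * (Q * P) c d = 0) := by
    rcases hel with hel | hel
    · exact Matrix.mul_apply_mul_mul_apply_eq_zero fun a j k b c l =>
        hel.mul_mul_eq_zero hcomm hP hoddP (hQ k b) a j c l
    · exact (Matrix.mul_apply_mul_mul_apply_eq_zero fun j a b k l c =>
        hel.mul_mul_eq_zero hcomm hQ hoddQ (hP b k) j a l c).symm
  have htrace : trace (Q * P) = -trace (P * Q) := Matrix.trace_mul_eq_neg_trace_mul fun α j =>
    hcomm.mul_comm_of_gpair_eq_one (hP α j) (add_comm (v j) (u α) ▸ hQ j α) (hoddP α j)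
  rw [sub_eq_add_neg]
  refine ⟨mdeg0_one.add hPQ, mdeg0_one.add hQP, ?_⟩
  rw [hDu.apply_one_add hPQ (by simpa using hPQ_sq), hDv.apply_one_add hQP hQP_sq, trace_neg,
    htrace]

/-- **Determinant identity for elementary off-diagonal blocks, odd case** (Lemma).
With `u` even-valued, `v` odd-valued weight maps and `P`, `Q` graded rectangular blocks
one of which is elementary, `1 − P Q` and `1 + Q P` are degree-zero graded matrices and
`D_u(1 − P Q) = D_v(1 + Q P)`. -/
theorem graded_det_elementary_odd {n N₁ N₂ : ℕ} (hn : 1 ≤ n) (hN₁ : 1 ≤ N₁) (hN₂ : 1 ≤ N₂)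
    {K A : Type*} [Field K] [CharZero K] [Ring A] [Algebra K A]
    (𝒜 : Gamma n → Submodule K A) [GradedAlgebra 𝒜] (hcomm : GradedComm 𝒜)
    (u : Fin N₁ → Gamma n) (hu : ∀ α, GammaEven (u α))
    (v : Fin N₂ → Gamma n) (hv : ∀ j, ¬ GammaEven (v j))
    (lo : LinearOrder (Gamma n))
    (Du : Matrix (Fin N₁) (Fin N₁) A → A) (hDu : DetAxioms 𝒜 lo u Du)
    (Dv : Matrix (Fin N₂) (Fin N₂) A → A) (hDv : DetAxioms 𝒜 lo v Dv)
    (P : Matrix (Fin N₁) (Fin N₂) A) (hP : ∀ α j, P α j ∈ 𝒜 (u α + v j))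
    (Q : Matrix (Fin N₂) (Fin N₁) A) (hQ : ∀ j α, Q j α ∈ 𝒜 (v j + u α))
    (hel : Elementary P ∨ Elementary Q) :
    Mdeg0 𝒜 u (1 - P * Q) ∧ Mdeg0 𝒜 v (1 + Q * P) ∧
      Du (1 - P * Q) = Dv (1 + Q * P) :=
  graded_det_elementary_odd_general 𝒜 hcomm u hu v hv lo Du hDu Dv hDv P hP Q hQ hel
end
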